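/- Let h(Ã,B) = sup_{F ∈ ℝ^{d×d}} [Ã:F + (1/(2(G+L/2))) B:(G FFᵀF + (L/2)|F|²F) − (1/4)|FᵀF|²]. If |B|³ > (8d/9)|Ã|, then h(Ã,B) ≥ c(|Ã|^{4/3} + |B|⁴) for a constant c > 0 depending only on d. -/

import Mathlib

open Matrix

noncomputable def frob {d : ℕ} (F : Matrix (Fin d) (Fin d) ℝ) : ℝ :=
  Real.sqrt (∑ i, ∑ j, (F i j) ^ 2)

noncomputable def mdot {d : ℕ} (A B : Matrix (Fin d) (Fin d) ℝ) : ℝ :=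
  ∑ i, ∑ j, A i j * B i j

/-- The reduced Saint Venant–Kirchhoff dual function h(Ã, B). -/
noncomputable def svkh (G L : ℝ) {d : ℕ} (At B : Matrix (Fin d) (Fin d) ℝ) : ℝ :=
  sSup { z | ∃ F : Matrix (Fin d) (Fin d) ℝ,
    z = mdot At F
        + (1 / (2 * (G + L / 2))) * mdot B (G • (F * Fᵀ * F) + ((L / 2) * frob F ^ 2) • F)
        - (1/4) * frob (Fᵀ * F) ^ 2 }


/-!
On a rank-one matrix `F = u vᵀ` one has `F Fᵀ F = |F|² F` and `|Fᵀ F| = |F|²`, so the `G`- and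
`L`-terms merge into `(G + L/2) |F|² F`, the prefactor cancels, and the objective becomes
`uᵀ Ã v + ½ |F|² uᵀ B v - ¼ |F|⁴`, independently of `G` and `L`. Take `v = e_k` with `b = B e_k`
a column of maximal norm, so that `|b|² ≥ |B|² / d`, and `u = t b`: the objective is
`t α + t³ |b|⁴ / 2 - t⁴ |b|⁴ / 4` with `α = bᵀ Ã e_k`, and `t = 1` or `t = -1/4`, according to the
sign of `α + |b|⁴ / 8`, makes it at least `|b|⁴ / 64 ≥ |B|⁴ / (64 d²)`. The hypothesis
`|B|³ > (8d/9) |Ã|` bounds `|Ã|^{4/3}` by `2 |B|⁴`. The supremum is finite since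
`|F|⁴ ≤ d |Fᵀ F|²` lets the quartic term dominate.
-/

open Finset

attribute [local instance] Matrix.frobeniusNormedAddCommGroup Matrix.frobeniusNormedSpace
  Matrix.frobeniusNormSMulClass

lemma rpow_div_le_of_pow_le {x y : ℝ} {m n : ℕ} (hx : 0 ≤ x) (hy : 0 ≤ y) (hn : n ≠ 0)
    (h : x ^ m ≤ y ^ n) : x ^ ((m : ℝ) / n) ≤ y := by
  rwa [← pow_le_pow_iff_left₀ (by positivity) hy hn, ← Real.rpow_natCast, ← Real.rpow_mul hx,
    div_mul_cancel₀ _ (by exact_mod_cast hn), Real.rpow_natCast]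

lemma linear_add_cubic_sub_quartic_le {a b q r : ℝ} (ha : 0 ≤ a) (hb : 0 ≤ b) (hq : 0 < q)
    (hr : 0 ≤ r) :
    a * r + b * r ^ 3 - r ^ 4 / q ≤ a * max 1 ((a + b) * q) + b * max 1 ((a + b) * q) ^ 3 := by
  set K := max 1 ((a + b) * q)
  rcases le_or_gt r K with hrK | hKr
  · have : 0 ≤ r ^ 4 / q := by positivity
    calc a * r + b * r ^ 3 - r ^ 4 / q ≤ a * r + b * r ^ 3 := by linarith
      _ ≤ a * K + b * K ^ 3 := by gcongr
  · have hr1 : 1 ≤ r := (le_max_left _ _).trans hKr.le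
    have hrq : (a + b) * q ≤ r := (le_max_right _ _).trans hKr.le
    have hcube : a * r + b * r ^ 3 ≤ (a + b) * r ^ 3 := by
      nlinarith [pow_le_pow_right₀ hr1 (by norm_num : 1 ≤ 3)]
    have hquartic : a * r + b * r ^ 3 ≤ r ^ 4 / q := by
      rw [le_div_iff₀ hq]
      nlinarith [mul_le_mul_of_nonneg_right hrq (pow_nonneg hr 3)]
    have : 0 ≤ a * K + b * K ^ 3 := by positivity
    linarith

lemma exists_le_linear_add_cubic_sub_quartic (α P : ℝ) (hP : 0 ≤ P) :
    ∃ t : ℝ, P / 64 ≤ t * α + t ^ 3 * P / 2 - t ^ 4 * P / 4 := by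
  by_cases hα : -(P / 8) ≤ α
  · exact ⟨1, by linarith⟩
  · exact ⟨-1 / 4, by linarith⟩

section
variable {d : ℕ}

lemma frob_eq_norm (F : Matrix (Fin d) (Fin d) ℝ) : frob F = ‖F‖ := by
  simp only [frob, frobenius_norm_def, Real.norm_eq_abs, Real.rpow_two, sq_abs, Real.sqrt_eq_rpow]

lemma frob_nonneg (F : Matrix (Fin d) (Fin d) ℝ) : 0 ≤ frob F := Real.sqrt_nonneg _

lemma frob_sq (F : Matrix (Fin d) (Fin d) ℝ) : frob F ^ 2 = mdot F F := by
  rw [frob, Real.sq_sqrt (by positivity)]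
  simp only [mdot, sq]

lemma abs_mdot_le (A F : Matrix (Fin d) (Fin d) ℝ) : |mdot A F| ≤ frob A * frob F := by
  have cauchySchwarz (X : Matrix (Fin d) (Fin d) ℝ) : mdot X F ≤ frob X * frob F := by
    have h := Real.sum_mul_le_sqrt_mul_sqrt univ (fun p : Fin d × Fin d => X p.1 p.2)
      (fun p => F p.1 p.2)
    simp only [Fintype.sum_prod_type] at h
    exact h
  have hneg := cauchySchwarz (-A)
  rw [show mdot (-A) F = -mdot A F by simp [mdot], show frob (-A) = frob A by simp [frob]] at hneg
  exact abs_le.2 ⟨by linarith, cauchySchwarz A⟩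

lemma mdot_add_smul_right (A X Y : Matrix (Fin d) (Fin d) ℝ) (a b : ℝ) :
    mdot A (a • X + b • Y) = a * mdot A X + b * mdot A Y := by
  simp only [mdot, Matrix.add_apply, Matrix.smul_apply, smul_eq_mul, mul_sum, ← sum_add_distrib]
  exact sum_congr rfl fun i _ => sum_congr rfl fun j _ => by ring

lemma mdot_vecMulVec (A : Matrix (Fin d) (Fin d) ℝ) (u v : Fin d → ℝ) :
    mdot A (vecMulVec u v) = u ⬝ᵥ A *ᵥ v := by
  simp only [mdot, vecMulVec_apply, dotProduct, mulVec, mul_sum]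
  exact sum_congr rfl fun i _ => sum_congr rfl fun j _ => by ring

lemma frob_pow_four_le_mul_frob_transpose_mul_self (F : Matrix (Fin d) (Fin d) ℝ) :
    frob F ^ 4 ≤ d * frob (Fᵀ * F) ^ 2 := by
  have htrace : frob F ^ 2 = ∑ j, (Fᵀ * F) j j := by
    rw [frob_sq, mdot, sum_comm]
    simp [mul_apply]
  have hdiag : ∑ j, (Fᵀ * F) j j ^ 2 ≤ frob (Fᵀ * F) ^ 2 := by
    rw [frob_sq]
    refine sum_le_sum fun j _ => ?_
    simpa [sq] using single_le_sum (f := fun k => (Fᵀ * F) j k ^ 2) (fun _ _ => sq_nonneg _)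
      (mem_univ j)
  calc frob F ^ 4 = (∑ j, (Fᵀ * F) j j) ^ 2 := by rw [← htrace]; ring
    _ ≤ d * ∑ j, (Fᵀ * F) j j ^ 2 := by
        simpa using sq_sum_le_card_mul_sum_sq (s := univ) (f := fun j => (Fᵀ * F) j j)
    _ ≤ d * frob (Fᵀ * F) ^ 2 := by gcongr

lemma exists_frob_sq_le_mul_col_dotProduct [NeZero d] (B : Matrix (Fin d) (Fin d) ℝ) :
    ∃ k, frob B ^ 2 ≤ d * (B.col k ⬝ᵥ B.col k) := by
  obtain ⟨k, -, hk⟩ := exists_max_image univ (fun k => B.col k ⬝ᵥ B.col k) univ_nonempty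
  refine ⟨k, ?_⟩
  calc frob B ^ 2 = ∑ j, B.col j ⬝ᵥ B.col j := by
        rw [frob_sq, mdot, sum_comm]; rfl
    _ ≤ d * (B.col k ⬝ᵥ B.col k) := by
        simpa using sum_le_card_nsmul univ _ _ fun j _ => hk j (mem_univ j)

lemma frob_vecMulVec_sq (u v : Fin d → ℝ) :
    frob (vecMulVec u v) ^ 2 = (u ⬝ᵥ u) * (v ⬝ᵥ v) := by
  rw [frob_sq, mdot_vecMulVec, vecMulVec_mulVec, op_smul_eq_smul, dotProduct_smul, smul_eq_mul,
    mul_comm]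

lemma vecMulVec_mul_transpose_mul_self (u v : Fin d → ℝ) :
    vecMulVec u v * (vecMulVec u v)ᵀ * vecMulVec u v
      = ((u ⬝ᵥ u) * (v ⬝ᵥ v)) • vecMulVec u v := by
  rw [transpose_vecMulVec, vecMulVec_mul_vecMulVec, vecMulVec_mul_vecMulVec, smul_dotProduct,
    vecMulVec_smul, smul_eq_mul, mul_comm]

noncomputable def svkhObjective (G L : ℝ) (At B F : Matrix (Fin d) (Fin d) ℝ) : ℝ :=
  mdot At F + (1 / (2 * (G + L / 2))) * mdot B (G • (F * Fᵀ * F) + ((L / 2) * frob F ^ 2) • F)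
    - (1 / 4) * frob (Fᵀ * F) ^ 2

variable (G L : ℝ) (At B : Matrix (Fin d) (Fin d) ℝ)

lemma svkh_eq_sSup_range : svkh G L At B = sSup (Set.range (svkhObjective G L At B)) := by
  rw [svkh]
  congr 1
  ext z
  exact exists_congr fun F => eq_comm

lemma svkhObjective_vecMulVec {G L : ℝ} (hGL : G + L / 2 ≠ 0) (u v : Fin d → ℝ) :
    svkhObjective G L At B (vecMulVec u v)
      = u ⬝ᵥ At *ᵥ v + (u ⬝ᵥ u) * (v ⬝ᵥ v) * (u ⬝ᵥ B *ᵥ v) / 2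
        - ((u ⬝ᵥ u) * (v ⬝ᵥ v)) ^ 2 / 4 := by
  rw [svkhObjective, vecMulVec_mul_transpose_mul_self, transpose_vecMulVec,
    vecMulVec_mul_vecMulVec, frob_vecMulVec_sq, frob_vecMulVec_sq, smul_smul, mdot_add_smul_right,
    mdot_vecMulVec, mdot_vecMulVec, smul_dotProduct, dotProduct_smul, smul_eq_mul]
  have hw : 1 / (2 * (G + L / 2)) * (G + L / 2) = 1 / 2 := by
    rw [one_div, mul_inv, mul_assoc, inv_mul_cancel₀ hGL, mul_one, one_div]
  linear_combination (u ⬝ᵥ u) * (v ⬝ᵥ v) * (u ⬝ᵥ B *ᵥ v) * hw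

lemma svkhObjective_le [NeZero d] (F : Matrix (Fin d) (Fin d) ℝ) :
    svkhObjective G L At B F ≤ frob At * frob F
      + |1 / (2 * (G + L / 2))| * (|G| + |L| / 2) * frob B * frob F ^ 3
      - frob F ^ 4 / (4 * d) := by
  set w := 1 / (2 * (G + L / 2))
  set X := G • (F * Fᵀ * F) + ((L / 2) * frob F ^ 2) • F
  have hX : frob X ≤ (|G| + |L| / 2) * frob F ^ 3 := by
    simp only [X, frob_eq_norm]
    have hcube : ‖F * Fᵀ * F‖ ≤ ‖F‖ ^ 3 := by
      calc ‖F * Fᵀ * F‖ ≤ ‖F‖ * ‖Fᵀ‖ * ‖F‖ :=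
            (frobenius_norm_mul _ _).trans (by gcongr; exact frobenius_norm_mul _ _)
        _ = ‖F‖ ^ 3 := by rw [frobenius_norm_transpose]; ring
    calc ‖G • (F * Fᵀ * F) + ((L / 2) * ‖F‖ ^ 2) • F‖
        ≤ |G| * ‖F * Fᵀ * F‖ + |L / 2 * ‖F‖ ^ 2| * ‖F‖ := by
          refine (norm_add_le _ _).trans_eq ?_
          rw [norm_smul, norm_smul, Real.norm_eq_abs, Real.norm_eq_abs]
      _ ≤ (|G| + |L| / 2) * ‖F‖ ^ 3 := by
          rw [abs_mul, abs_div, abs_two, abs_of_nonneg (by positivity : 0 ≤ ‖F‖ ^ 2)]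
          nlinarith [mul_le_mul_of_nonneg_left hcube (abs_nonneg G)]
  have hlinear : mdot At F ≤ frob At * frob F := (le_abs_self _).trans (abs_mdot_le _ _)
  have hcubic : w * mdot B X ≤ |w| * (|G| + |L| / 2) * frob B * frob F ^ 3 :=
    calc w * mdot B X ≤ |w| * |mdot B X| := (le_abs_self _).trans (abs_mul _ _).le
      _ ≤ |w| * (frob B * ((|G| + |L| / 2) * frob F ^ 3)) := by
          gcongr
          exact (abs_mdot_le _ _).trans (by gcongr; exact frob_nonneg B)
      _ = |w| * (|G| + |L| / 2) * frob B * frob F ^ 3 := by ring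
  have hquartic : frob F ^ 4 / (4 * d) ≤ 1 / 4 * frob (Fᵀ * F) ^ 2 := by
    have hd : (0 : ℝ) < d := by exact_mod_cast Nat.pos_of_neZero d
    rw [div_le_iff₀ (by positivity)]
    nlinarith [frob_pow_four_le_mul_frob_transpose_mul_self F]
  rw [svkhObjective]
  linarith

lemma bddAbove_range_svkhObjective [NeZero d] : BddAbove (Set.range (svkhObjective G L At B)) := by
  have hd : (0 : ℝ) < 4 * d := by have := Nat.pos_of_neZero d; positivity
  refine ⟨_, Set.forall_mem_range.2 fun F => (svkhObjective_le G L At B F).trans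
    (linear_add_cubic_sub_quartic_le (frob_nonneg At) ?_ hd (frob_nonneg F))⟩
  have := frob_nonneg B
  positivity

lemma svkhObjective_le_svkh [NeZero d] (F : Matrix (Fin d) (Fin d) ℝ) :
    svkhObjective G L At B F ≤ svkh G L At B := by
  rw [svkh_eq_sSup_range]
  exact le_csSup (bddAbove_range_svkhObjective G L At B) (Set.mem_range_self F)

lemma frob_pow_four_div_le_svkh [NeZero d] {G L : ℝ} (hGL : G + L / 2 ≠ 0) :
    frob B ^ 4 / (64 * d ^ 2) ≤ svkh G L At B := by
  obtain ⟨k, hk⟩ := exists_frob_sq_le_mul_col_dotProduct B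
  set b := B.col k
  obtain ⟨t, ht⟩ := exists_le_linear_add_cubic_sub_quartic (b ⬝ᵥ At *ᵥ Pi.single k 1)
    ((b ⬝ᵥ b) ^ 2) (sq_nonneg _)
  have hd : (0 : ℝ) < d := by exact_mod_cast Nat.pos_of_neZero d
  calc frob B ^ 4 / (64 * d ^ 2) ≤ (b ⬝ᵥ b) ^ 2 / 64 := by
        rw [div_le_div_iff₀ (by positivity) (by norm_num)]
        nlinarith [pow_le_pow_left₀ (sq_nonneg (frob B)) hk 2]
    _ ≤ _ := ht
    _ = svkhObjective G L At B (vecMulVec (t • b) (Pi.single k 1)) := by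
        simp only [svkhObjective_vecMulVec At B hGL, mulVec_single_one, smul_dotProduct,
          dotProduct_smul, smul_eq_mul, single_one_dotProduct, Pi.single_eq_same, b]
        ring
    _ ≤ svkh G L At B := svkhObjective_le_svkh G L At B _

end

theorem svkh_lower_bound_large_B (d : ℕ) :
    ∃ c : ℝ, 0 < c ∧
      ∀ (G L : ℝ), 0 < G → 0 < G + d * L / 2 →
        ∀ (At B : Matrix (Fin d) (Fin d) ℝ),
          (8 * d / 9) * frob At < frob B ^ 3 →
          c * (frob At ^ ((4:ℝ)/3) + frob B ^ 4) ≤ svkh G L At B := by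
  refine ⟨1 / (192 * ((d : ℝ) + 1) ^ 2), by positivity, fun G L hG hGdL At B hlt => ?_⟩
  have hd : (1 : ℝ) ≤ d := by
    rcases Nat.eq_zero_or_pos d with rfl | hd
    · simp [frob] at hlt
    · exact_mod_cast hd
  have : NeZero d := ⟨by rintro rfl; norm_num at hd⟩
  -- `d (G + L/2) = (d - 1) G + (G + d L/2)`
  have hGL : G + L / 2 ≠ 0 := by nlinarith
  have hA : frob At ^ ((4 : ℝ) / 3) ≤ 2 * frob B ^ 4 := by
    have hAB : frob At ≤ 9 / 8 * frob B ^ 3 := by nlinarith [frob_nonneg At]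
    have := pow_le_pow_left₀ (frob_nonneg At) hAB 4
    exact_mod_cast rpow_div_le_of_pow_le (m := 4) (n := 3) (frob_nonneg At) (by positivity)
      (by norm_num) (by nlinarith [pow_nonneg (frob_nonneg B) 12])
  calc 1 / (192 * ((d : ℝ) + 1) ^ 2) * (frob At ^ ((4 : ℝ) / 3) + frob B ^ 4)
      ≤ 1 / (192 * ((d : ℝ) + 1) ^ 2) * (3 * frob B ^ 4) := by gcongr; linarith
    _ = frob B ^ 4 / (64 * ((d : ℝ) + 1) ^ 2) := by field_simp; ring
    _ ≤ frob B ^ 4 / (64 * d ^ 2) := by gcongr; linarith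
    _ ≤ svkh G L At B := frob_pow_four_div_le_svkh At B hGL
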